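/- For all N_H ≥ 1, f ≥ 1 and h ≥ 1, the counts Θ(N_H, f, h, e) over all possible numbers e of initially extractable columns partition the set of all h-tuples of N_H × f column-regular binary matrices: Σ_{e=0}^{f} Θ(N_H, f, h, e) = N_H^{h·f}. -/

import Mathlib

/-!
A column-regular `N_H × f` matrix is the same as a map `d : [f] → [N_H]` sending each column to
the row of its nonzero entry; its pivotal columns are the isolated points of `d` (those whose
fibre is a singleton), and stopping matrices are the maps without isolated points. A map whose
isolated set is `B` is an injection `B → [N_H]` glued to a map from the complement of `B` into
the complement of its image having no isolated points, so there are
`C(N_H, |B|) |B|! z(N_H - |B|, f - |B|)` of them, and summing over `B` gives `N_H ^ f`.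
Raising this to the power `h` expands into a sum over tuples `(B_1, …, B_h)`; grouping the
tuples by their union `E` (the extractable columns, `|E| = e`) and then by the sizes
`b_i = |B_i|` produces the factors `C(f, e)` and `Ψ(e, b)` of `Θ`.
-/

/-- The weight of row `i` of a binary matrix `F`: the number of nonzero entries in row `i`. -/
def rowWeight {m n : ℕ} (F : Matrix (Fin m) (Fin n) Bool) (i : Fin m) : ℕ :=
  (Finset.univ.filter (fun j => F i j = true)).card

/-- The weight of column `j` of a binary matrix `F`: the number of nonzero entries in column `j`. -/
def colWeight {m n : ℕ} (F : Matrix (Fin m) (Fin n) Bool) (j : Fin n) : ℕ :=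
  (Finset.univ.filter (fun i => F i j = true)).card

/-- A binary matrix is column-regular if every column contains exactly one nonzero entry. -/
def ColRegular {m n : ℕ} (F : Matrix (Fin m) (Fin n) Bool) : Prop :=
  ∀ j, colWeight F j = 1

/-- A stopping matrix: a column-regular binary matrix with no row of weight one. -/
def IsStopping {m n : ℕ} (F : Matrix (Fin m) (Fin n) Bool) : Prop :=
  ColRegular F ∧ ∀ i, rowWeight F i ≠ 1

instance {m n : ℕ} (F : Matrix (Fin m) (Fin n) Bool) : Decidable (ColRegular F) :=
  inferInstanceAs (Decidable (∀ j, colWeight F j = 1))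

instance {m n : ℕ} (F : Matrix (Fin m) (Fin n) Bool) : Decidable (IsStopping F) :=
  inferInstanceAs (Decidable (ColRegular F ∧ ∀ i, rowWeight F i ≠ 1))

/-- `z m n` is the number of `m × n` stopping matrices. -/
def z (m n : ℕ) : ℕ :=
  Fintype.card {F : Matrix (Fin m) (Fin n) Bool // IsStopping F}

/-- `Psi h e b` is the number of `h`-tuples `(C 1, …, C h)` of subsets of a fixed
`e`-element set with `|C i| = b i` for every `i` and whose union is the whole set. -/
def Psi (h e : ℕ) (b : Fin h → ℕ) : ℕ :=
  Fintype.card {C : Fin h → Finset (Fin e) //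
    (∀ i, (C i).card = b i) ∧ Finset.univ.biUnion C = Finset.univ}

/-- In a column-regular matrix, column `j` is pivotal if the (unique) row containing the
nonzero entry of column `j` has weight one. -/
def Pivotal {m n : ℕ} (F : Matrix (Fin m) (Fin n) Bool) (j : Fin n) : Prop :=
  ∃ i, F i j = true ∧ rowWeight F i = 1

instance {m n : ℕ} (F : Matrix (Fin m) (Fin n) Bool) (j : Fin n) : Decidable (Pivotal F j) :=
  inferInstanceAs (Decidable (∃ i, F i j = true ∧ rowWeight F i = 1))

/-- Given an `h`-tuple of matrices, column `j` is initially extractable if it is pivotal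
in at least one matrix of the tuple. -/
def Extractable {m n h : ℕ} (G : Fin h → Matrix (Fin m) (Fin n) Bool) (j : Fin n) : Prop :=
  ∃ i, Pivotal (G i) j

instance {m n h : ℕ} (G : Fin h → Matrix (Fin m) (Fin n) Bool) (j : Fin n) :
    Decidable (Extractable G j) :=
  inferInstanceAs (Decidable (∃ i, Pivotal (G i) j))

/-- The count `Θ(N_H, f, h, e)` from Lemma 2. -/
def Theta (NH f h e : ℕ) : ℕ :=
  f.choose e * ∑ b ∈ Fintype.piFinset (fun _ : Fin h => Finset.range (e + 1)),
    Psi h e b * ∏ i, (NH.choose (b i) * (b i).factorial * z (NH - b i) (f - b i))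

open Finset Function

section Isolated

variable {α β : Type*} [Fintype α] [DecidableEq α] [DecidableEq β]

def isolated (d : α → β) : Finset α := {x | ∀ y, d y = d x → y = x}

@[simp]
lemma mem_isolated {d : α → β} {x : α} : x ∈ isolated d ↔ ∀ y, d y = d x → y = x := by
  simp [isolated]

lemma forall_mem_isolated_iff {d : α → β} : (∀ x, x ∈ isolated d) ↔ Injective d := by
  simp only [mem_isolated]
  exact ⟨fun H x y hxy => H y x hxy, fun H x y hxy => H hxy⟩

lemma isolated_eq_empty_iff {d : α → β} : isolated d = ∅ ↔ ∀ b, #{x | d x = b} ≠ 1 := by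
  simp only [eq_empty_iff_forall_notMem, mem_isolated, ne_eq, card_eq_one, not_exists]
  constructor
  · intro H b x hx
    have hxb : d x = b := by simpa using hx.ge (mem_singleton_self x)
    refine H x fun y hy => ?_
    simpa using hx.le (mem_filter.2 ⟨mem_univ y, hy.trans hxb⟩)
  · intro H x hx
    exact H (d x) x
      (eq_singleton_iff_unique_mem.2 ⟨by simp, fun y hy => hx y (by simpa using hy)⟩)

lemma isolated_arrowCongr {α' β' : Type*} [Fintype α'] [DecidableEq α'] [DecidableEq β']
    (e₁ : α ≃ α') (e₂ : β ≃ β') (d : α → β) :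
    isolated (e₁.arrowCongr e₂ d) = (isolated d).map e₁.toEmbedding := by
  ext x
  simp only [mem_isolated, Equiv.arrowCongr_apply, comp_apply, e₂.apply_eq_iff_eq, mem_map_equiv]
  rw [← e₁.symm.forall_congr_right]
  simp [e₁.symm_apply_eq]

end Isolated

section StoppingMatrix

variable {m n : ℕ}

def toMatrix (d : Fin n → Fin m) : Matrix (Fin m) (Fin n) Bool :=
  Matrix.of fun i j => decide (d j = i)

lemma toMatrix_injective : Injective (toMatrix (m := m) (n := n)) := by
  intro d d' h
  funext j
  simpa [toMatrix] using congrFun (congrFun h (d' j)) j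

lemma rowWeight_toMatrix (d : Fin n → Fin m) (i : Fin m) :
    rowWeight (toMatrix d) i = #{j | d j = i} := by
  simp [rowWeight, toMatrix]

lemma colRegular_toMatrix (d : Fin n → Fin m) : ColRegular (toMatrix d) := by
  intro j
  simp [colWeight, toMatrix, eq_comm, filter_eq']

lemma exists_toMatrix_eq {F : Matrix (Fin m) (Fin n) Bool} (hF : ColRegular F) :
    ∃ d, toMatrix d = F := by
  choose d hd using fun j => card_eq_one.1 (hF j)
  refine ⟨d, Matrix.ext fun i j => ?_⟩
  have hmem : F i j = true ↔ i = d j := by simpa using congrArg (i ∈ ·) (hd j)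
  rw [Bool.eq_iff_iff, hmem]
  simp [toMatrix, eq_comm]

lemma isStopping_toMatrix_iff (d : Fin n → Fin m) :
    IsStopping (toMatrix d) ↔ isolated d = ∅ := by
  simp [IsStopping, colRegular_toMatrix, rowWeight_toMatrix, isolated_eq_empty_iff]

lemma z_eq_card (m n : ℕ) : z m n = Fintype.card {d : Fin n → Fin m // isolated d = ∅} := by
  refine (Fintype.card_of_bijective
    (f := fun d => ⟨toMatrix d.1, (isStopping_toMatrix_iff _).2 d.2⟩)
    ⟨fun d d' h => Subtype.ext (toMatrix_injective (congrArg Subtype.val h)), ?_⟩).symm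
  rintro ⟨F, hF⟩
  obtain ⟨d, rfl⟩ := exists_toMatrix_eq hF.1
  exact ⟨⟨d, (isStopping_toMatrix_iff d).1 hF⟩, rfl⟩

lemma card_isolated_eq_empty (α β : Type*) [Fintype α] [DecidableEq α] [Fintype β]
    [DecidableEq β] :
    Fintype.card {d : α → β // isolated d = ∅} = z (Fintype.card β) (Fintype.card α) := by
  rw [z_eq_card]
  refine Fintype.card_congr <|
    (Fintype.equivFin α).arrowCongr (Fintype.equivFin β) |>.subtypeEquiv fun d => ?_
  rw [isolated_arrowCongr, map_eq_empty]

end StoppingMatrix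

section Glue

variable {α β : Type*} [Fintype α] [DecidableEq α] [DecidableEq β] {B : Finset α} (ι : B → β)

def glue (g : {x // x ∉ B} → {y // y ∉ Set.range ι}) : α → β :=
  fun a => if h : a ∈ B then ι ⟨a, h⟩ else g ⟨a, h⟩

variable (g : {x // x ∉ B} → {y // y ∉ Set.range ι})

lemma mem_isolated_glue_of_mem {a : α} (ha : a ∈ B) :
    a ∈ isolated (glue ι g) ↔ ⟨a, ha⟩ ∈ isolated ι := by
  simp only [mem_isolated, Subtype.forall, Subtype.ext_iff]
  constructor
  · intro H y hy hya
    exact H y (by simpa [glue, hy, ha] using hya)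
  · intro H y hya
    by_cases hy : y ∈ B
    · exact H y hy (by simpa [glue, hy, ha] using hya)
    · have hga : (g ⟨y, hy⟩ : β) = ι ⟨a, ha⟩ := by simpa [glue, hy, ha] using hya
      exact absurd ⟨_, hga.symm⟩ (g ⟨y, hy⟩).2

lemma mem_isolated_glue_of_notMem {a : α} (ha : a ∉ B) :
    a ∈ isolated (glue ι g) ↔ ⟨a, ha⟩ ∈ isolated g := by
  simp only [mem_isolated, Subtype.forall, Subtype.ext_iff]
  constructor
  · intro H y hy hya
    exact H y (by simp [glue, hy, ha, hya])
  · intro H y hya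
    by_cases hy : y ∈ B
    · exact absurd ⟨_, by simpa [glue, hy, ha] using hya⟩ (g ⟨a, ha⟩).2
    · exact H y hy (by simpa [glue, hy, ha] using hya)

lemma isolated_glue_eq_iff : isolated (glue ι g) = B ↔ Injective ι ∧ isolated g = ∅ := by
  rw [← forall_mem_isolated_iff, eq_empty_iff_forall_notMem, Finset.ext_iff]
  simp only [Subtype.forall]
  constructor
  · intro H
    exact ⟨fun a ha => (mem_isolated_glue_of_mem ι g ha).1 ((H a).2 ha),
      fun a ha h => ha ((H a).1 ((mem_isolated_glue_of_notMem ι g ha).2 h))⟩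
  · rintro ⟨hB, hBc⟩ a
    by_cases ha : a ∈ B
    · simpa [ha] using (mem_isolated_glue_of_mem ι g ha).2 (hB a ha)
    · simpa [ha] using (mem_isolated_glue_of_notMem ι g ha).not.2 (hBc a ha)

end Glue

section CountByIsolated

variable {α β : Type*} [Fintype α] [DecidableEq α] [DecidableEq β] {B : Finset α} {ι : B → β}
  {d : α → β}

lemma apply_notMem_range (hd : isolated d = B) (hι : (fun x : B => d x) = ι) {x : α}
    (hx : x ∉ B) : d x ∉ Set.range ι := by
  rintro ⟨y, hy⟩
  have hy' : d y = d x := by rw [← hy, ← hι]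
  exact hx (mem_isolated.1 (hd ▸ y.2) x hy'.symm ▸ y.2)

lemma glue_restrict (hd : isolated d = B) (hι : (fun x : B => d x) = ι) :
    glue ι (fun x => ⟨d x, apply_notMem_range hd hι x.2⟩) = d := by
  funext a
  by_cases ha : a ∈ B
  · simp [glue, ha, ← hι]
  · simp [glue, ha]

def isolatedFiberEquiv (hι : Injective ι) :
    {g : {x // x ∉ B} → {y // y ∉ Set.range ι} // isolated g = ∅} ≃
      {d : α → β // isolated d = B ∧ (fun x : B => d x) = ι} where
  toFun g := ⟨glue ι g, (isolated_glue_eq_iff ι g).2 ⟨hι, g.2⟩, funext fun x => by simp [glue]⟩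
  invFun d := ⟨fun x => ⟨d.1 x, apply_notMem_range d.2.1 d.2.2 x.2⟩,
    ((isolated_glue_eq_iff ι _).1 ((glue_restrict d.2.1 d.2.2).symm ▸ d.2.1)).2⟩
  left_inv g := by
    ext x
    simp [glue, x.2]
  right_inv d := Subtype.ext (glue_restrict d.2.1 d.2.2)

lemma injective_restrict_of_isolated_eq (hd : isolated d = B) : Injective fun x : B => d x :=
  fun x y hxy => Subtype.ext (mem_isolated.1 (hd ▸ y.2 : (y : α) ∈ isolated d) x hxy)

variable [Fintype β]

lemma card_isolated_eq_restrict_eq (hι : Injective ι) :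
    #{d : α → β | isolated d = B ∧ (fun x : B => d x) = ι} =
      z (Fintype.card β - #B) (Fintype.card α - #B) := by
  rw [← Fintype.card_subtype, ← Fintype.card_congr (isolatedFiberEquiv hι),
    card_isolated_eq_empty, Fintype.card_subtype_compl, Fintype.card_subtype_compl,
    Fintype.card_coe, Set.card_range_of_injective hι, Fintype.card_coe]

lemma card_isolated_eq (B : Finset α) :
    #{d : α → β | isolated d = B} =
      (Fintype.card β).choose #B * (#B).factorial *
        z (Fintype.card β - #B) (Fintype.card α - #B) := by
  rw [card_eq_sum_card_fiberwise (f := fun d x => d x) (t := {ι : B → β | Injective ι})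
      fun d hd => by simpa using injective_restrict_of_isolated_eq (mem_filter.1 hd).2]
  rw [sum_congr rfl fun ι hι => by
      rw [filter_filter, card_isolated_eq_restrict_eq (mem_filter.1 hι).2], sum_const,
    smul_eq_mul, ← Fintype.card_subtype,
    Fintype.card_congr (Equiv.subtypeInjectiveEquivEmbedding _ _), Fintype.card_embedding_eq,
    Fintype.card_coe, Nat.descFactorial_eq_factorial_mul_choose, mul_comm (#B).factorial]

lemma sum_choose_factorial_z_eq_pow :
    ∑ B : Finset α, (Fintype.card β).choose #B * (#B).factorial *
      z (Fintype.card β - #B) (Fintype.card α - #B) = Fintype.card β ^ Fintype.card α := by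
  simp_rw [← card_isolated_eq (β := β), ← Fintype.card_fun, ← card_univ]
  exact (card_eq_sum_card_fiberwise fun _ _ => mem_univ _).symm

end CountByIsolated

section Psi

variable {α : Type*} [Fintype α] [DecidableEq α] {h : ℕ}

lemma card_biUnion_eq_eq_psi (E : Finset α) (b : Fin h → ℕ) :
    #{B : Fin h → Finset α | univ.biUnion B = E ∧ ∀ i, #(B i) = b i} = Psi h #E b := by
  set emb : Fin #E ↪ α := E.equivFin.symm.toEmbedding.trans (Embedding.subtype _)
  have hemb : univ.map emb = E := by
    simp [emb, ← map_map, map_univ_equiv, attach_map_val]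
  have map_biUnion (C : Fin h → Finset (Fin #E)) :
      univ.biUnion (fun i => (C i).map emb) = (univ.biUnion C).map emb := by
    simp only [map_eq_image, biUnion_image]
  rw [Psi, Fintype.card_subtype]
  symm
  refine card_bij (fun C _ i => (C i).map emb) (fun C hC => ?_) (fun C _ C' _ hCC' => ?_)
    (fun B hB => ?_)
  · simp only [mem_filter, mem_univ, true_and] at hC ⊢
    simp [map_biUnion, hC.2, hemb, hC.1]
  · exact funext fun i => map_injective emb (congrFun hCC' i)
  · simp only [mem_filter, mem_univ, true_and] at hB
    have hBsub (i : Fin h) : B i ⊆ univ.map emb := by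
      rw [hemb, ← hB.1]
      exact subset_biUnion_of_mem B (mem_univ i)
    choose C _ hC using fun i => subset_map_iff.1 (hBsub i)
    refine ⟨C, ?_, funext fun i => (hC i).symm⟩
    simp only [mem_filter, mem_univ, true_and]
    refine ⟨fun i => by rw [← hB.2 i, hC i, card_map], map_injective emb ?_⟩
    rw [← map_biUnion, hemb]
    simpa only [← hC] using hB.1

lemma sum_pi_eq_sum_psi {M : Type*} [AddCommMonoid M] (φ : (Fin h → ℕ) → M) :
    ∑ B : Fin h → Finset α, φ (fun i => #(B i)) =
      ∑ E : Finset α, ∑ b ∈ Fintype.piFinset fun _ : Fin h => range (#E + 1),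
        Psi h #E b • φ b := by
  rw [← sum_fiberwise univ (fun B => univ.biUnion B)]
  refine sum_congr rfl fun E _ => ?_
  have card_le (B : Fin h → Finset α) (hB : B ∈ filter (fun B => univ.biUnion B = E) univ)
      (i : Fin h) : #(B i) ≤ #E :=
    card_le_card ((mem_filter.1 hB).2 ▸ subset_biUnion_of_mem B (mem_univ i))
  rw [← sum_fiberwise_of_maps_to (g := fun B i => #(B i))
    fun B hB => Fintype.mem_piFinset.2 fun i => mem_range_succ_iff.2 (card_le B hB i)]
  refine sum_congr rfl fun b _ => ?_
  rw [sum_congr rfl fun B hB => by rw [(mem_filter.1 hB).2], sum_const, filter_filter,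
    ← card_biUnion_eq_eq_psi]
  simp only [funext_iff]

end Psi

theorem sum_theta_eq_total_general (NH f h : ℕ) :
    ∑ e ∈ Finset.range (f + 1), Theta NH f h e = NH ^ (h * f) := by
  let w : ℕ → ℕ := fun k => NH.choose k * k.factorial * z (NH - k) (f - k)
  calc ∑ e ∈ range (f + 1), Theta NH f h e
      = ∑ E : Finset (Fin f), ∑ b ∈ Fintype.piFinset fun _ : Fin h => range (#E + 1),
          Psi h #E b • ∏ i, w (b i) := by
        rw [← powerset_univ, sum_powerset_apply_card fun e =>
          ∑ b ∈ Fintype.piFinset fun _ : Fin h => range (e + 1), Psi h e b • ∏ i, w (b i)]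
        simp [Theta, w, mul_sum]
    _ = ∑ B : Fin h → Finset (Fin f), ∏ i, w #(B i) := (sum_pi_eq_sum_psi _).symm
    _ = ∏ _i : Fin h, ∑ B : Finset (Fin f), w #B := (Fintype.prod_sum fun _ B => w #B).symm
    _ = NH ^ (h * f) := by
        have hpow := sum_choose_factorial_z_eq_pow (α := Fin f) (β := Fin NH)
        simp only [Fintype.card_fin] at hpow
        rw [prod_const, card_fin, hpow, mul_comm, pow_mul]

/-- For `N_H ≥ 1`, `f ≥ 1` and `h ≥ 1`, the counts `Θ(N_H, f, h, e)`
over all possible numbers `e` of initially extractable columns partition the set of all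
`h`-tuples of `N_H × f` column-regular binary matrices:
`Σ_{e=0}^{f} Θ(N_H, f, h, e) = N_H^{h·f}`. -/
theorem sum_theta_eq_total (NH f h : ℕ) (hNH : 1 ≤ NH) (hf : 1 ≤ f) (hh : 1 ≤ h) :
    ∑ e ∈ Finset.range (f + 1), Theta NH f h e = NH ^ (h * f) :=
  sum_theta_eq_total_general NH f h
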